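/- arXiv:1704.07326 — 2 statements merged into one kernel-verified Lean document; each statement's English description precedes it below -/
import Mathlib

section
/- Let (X,μ) be a probability space and θ₁,…,θₙ μ-bounded automorphisms. Suppose κ > 0 satisfies: for every nonnegative g ∈ L²(X,μ), ‖g − μ(g)‖₂² ≤ κ·Σₖ ‖g − θₖ(g)‖₂·‖g‖₂. Then for every real-valued f ∈ L²(X,μ) with μ(f) = 0, ‖f‖₂ ≤ 4κ·Σₖ ‖f − θₖ(f)‖₂. -/
open MeasureTheory

/-!
Split `f = f⁺ - f⁻`. Both parts are nonnegative, lie in `L²`, and are images of `f` under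
`1`-Lipschitz maps vanishing at `0`, so `‖f± - θ(f±)‖₂ ≤ ‖f - θ(f)‖₂` and `‖f±‖₂ ≤ ‖f‖₂`; the
hypothesis then bounds the variance of each part by `κ · Σₖ ‖f - θₖ(f)‖₂ · ‖f‖₂`. Since `μ(f) = 0`,
the two parts have the same mean, so `f = (f⁺ - μ(f⁺)) - (f⁻ - μ(f⁻))` and
`‖f‖₂² ≤ 2 Var(f⁺) + 2 Var(f⁻) ≤ 4κ · Σₖ ‖f - θₖ(f)‖₂ · ‖f‖₂`; divide by `‖f‖₂`.
-/

/-- A nonsingular automorphism `θ` of `(X, μ)` is `μ`-bounded if the Radon–Nikodym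
derivative `d(μ ∘ θ)/dμ` is bounded above and below by positive constants. -/
def MuBounded {X : Type*} [MeasurableSpace X] (μ : Measure X) (θ : X ≃ᵐ X) : Prop :=
  ∃ c C : ENNReal, 0 < c ∧ C ≠ ⊤ ∧ c • μ ≤ μ.map θ ∧ μ.map θ ≤ C • μ

section

variable {X : Type*} [MeasurableSpace X] {μ : Measure X}

lemma MuBounded.exists_map_symm_le_smul {θ : X ≃ᵐ X} (h : MuBounded μ θ) :
    ∃ c : ENNReal, c ≠ ⊤ ∧ μ.map θ.symm ≤ c • μ := by
  obtain ⟨c, -, hc, -, hle, -⟩ := h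
  -- `c` may be `⊤`; `min c 1` is a finite positive lower bound that can be inverted
  set c' := min c 1
  have hc'0 : c' ≠ 0 := (lt_min hc one_pos).ne'
  have hc'top : c' ≠ ⊤ := ne_top_of_le_ne_top ENNReal.one_ne_top (min_le_right _ _)
  have hc'le : c' • μ ≤ μ.map θ :=
    (IsOrderedSMul.smul_le_smul_right _ _ (min_le_left c 1) μ).trans hle
  have hmap : c' • μ.map θ.symm ≤ μ := by
    simpa only [Measure.map_smul, θ.map_symm_map] using Measure.map_mono hc'le θ.symm.measurable
  refine ⟨c'⁻¹, ENNReal.inv_ne_top.2 hc'0, ?_⟩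
  calc μ.map θ.symm = c'⁻¹ • c' • μ.map θ.symm := by
        rw [smul_smul, ENNReal.inv_mul_cancel hc'0 hc'top, one_smul]
    _ ≤ c'⁻¹ • μ := smul_le_smul_left _ hmap

lemma MuBounded.memLp_comp_symm {E : Type*} [NormedAddCommGroup E] {p : ENNReal} {θ : X ≃ᵐ X}
    (h : MuBounded μ θ) {f : X → E} (hf : MemLp f p μ) : MemLp (fun x => f (θ.symm x)) p μ := by
  obtain ⟨c, hc, hle⟩ := h.exists_map_symm_le_smul
  exact (hf.of_measure_le_smul hc hle).comp_of_map θ.symm.measurable.aemeasurable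

lemma sqrt_integral_sq_le_of_abs_le {u v : X → ℝ} (hv : MemLp v 2 μ) (h : ∀ x, |u x| ≤ |v x|) :
    √(∫ x, u x ^ 2 ∂μ) ≤ √(∫ x, v x ^ 2 ∂μ) :=
  Real.sqrt_le_sqrt <| integral_mono_of_nonneg (.of_forall fun _ => sq_nonneg _)
    hv.integrable_sq (.of_forall fun x => sq_le_sq.2 (h x))

lemma sum_sqrt_mul_sqrt_comp_le {ι : Type*} [Fintype ι] {θ : ι → X ≃ᵐ X}
    (hθ : ∀ k, MuBounded μ (θ k)) {φ : ℝ → ℝ} (hφ : LipschitzWith 1 φ) (hφ0 : φ 0 = 0)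
    {f : X → ℝ} (hf : MemLp f 2 μ) :
    ∑ k, √(∫ x, (φ (f x) - φ (f ((θ k).symm x))) ^ 2 ∂μ) * √(∫ x, φ (f x) ^ 2 ∂μ)
      ≤ (∑ k, √(∫ x, (f x - f ((θ k).symm x)) ^ 2 ∂μ)) * √(∫ x, f x ^ 2 ∂μ) := by
  rw [Finset.sum_mul]
  refine Finset.sum_le_sum fun k _ => mul_le_mul ?_ ?_ (Real.sqrt_nonneg _) (Real.sqrt_nonneg _)
  · exact sqrt_integral_sq_le_of_abs_le (hf.sub ((hθ k).memLp_comp_symm hf)) fun x => by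
      simpa [Real.dist_eq] using hφ.dist_le_mul (f x) (f ((θ k).symm x))
  · exact sqrt_integral_sq_le_of_abs_le hf fun x => by
      simpa [Real.dist_eq, hφ0] using hφ.dist_le_mul (f x) 0

lemma integral_sq_sub_le {u v : X → ℝ} (hu : MemLp u 2 μ) (hv : MemLp v 2 μ) :
    ∫ x, (u x - v x) ^ 2 ∂μ ≤ 2 * ∫ x, u x ^ 2 ∂μ + 2 * ∫ x, v x ^ 2 ∂μ := by
  rw [← integral_const_mul, ← integral_const_mul,
    ← integral_add (hu.integrable_sq.const_mul 2) (hv.integrable_sq.const_mul 2)]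
  exact integral_mono (hu.sub hv).integrable_sq
    ((hu.integrable_sq.const_mul 2).add (hv.integrable_sq.const_mul 2))
    fun x => by nlinarith [sq_nonneg (u x + v x)]

lemma integral_sq_le_of_integral_eq_zero [IsFiniteMeasure μ] {f : X → ℝ} (hf : MemLp f 2 μ)
    (hmean : ∫ x, f x ∂μ = 0) :
    ∫ x, f x ^ 2 ∂μ ≤ 2 * ∫ x, ((f x)⁺ - ∫ y, (f y)⁺ ∂μ) ^ 2 ∂μ
      + 2 * ∫ x, ((f x)⁻ - ∫ y, (f y)⁻ ∂μ) ^ 2 ∂μ := by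
  have hpos : MemLp (fun x => (f x)⁺) 2 μ := hf.pos_part
  have hneg : MemLp (fun x => (f x)⁻) 2 μ := hf.neg_part
  have hmeans : ∫ y, (f y)⁺ ∂μ = ∫ y, (f y)⁻ ∂μ := by
    rw [← sub_eq_zero, ← integral_sub (hpos.integrable one_le_two) (hneg.integrable one_le_two)]
    simpa only [posPart_sub_negPart] using hmean
  calc ∫ x, f x ^ 2 ∂μ
      = ∫ x, (((f x)⁺ - ∫ y, (f y)⁺ ∂μ) - ((f x)⁻ - ∫ y, (f y)⁻ ∂μ)) ^ 2 ∂μ := by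
        simp only [hmeans, sub_sub_sub_cancel_right, posPart_sub_negPart]
    _ ≤ _ := integral_sq_sub_le (hpos.sub (memLp_const _)) (hneg.sub (memLp_const _))

end

/-- If for every nonnegative `g ∈ L²` one has
`‖g - μ(g)‖₂² ≤ κ · Σₖ ‖g - θₖ(g)‖₂ · ‖g‖₂`, then for every real-valued `f ∈ L²` with
`μ(f) = 0` one has `‖f‖₂ ≤ 4κ · Σₖ ‖f - θₖ(f)‖₂`, where `θ(g) = g ∘ θ⁻¹`. -/
theorem stmt6 {X : Type*} [MeasurableSpace X] (μ : Measure X) [IsProbabilityMeasure μ]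
    (n : ℕ) (θ : Fin n → X ≃ᵐ X) (hbdd : ∀ k, MuBounded μ (θ k))
    (κ : ℝ) (hκ : 0 < κ)
    (hyp : ∀ g : X → ℝ, MemLp g 2 μ → (∀ x, 0 ≤ g x) →
      ∫ x, (g x - ∫ y, g y ∂μ) ^ 2 ∂μ
        ≤ κ * ∑ k, Real.sqrt (∫ x, (g x - g ((θ k).symm x)) ^ 2 ∂μ)
            * Real.sqrt (∫ x, (g x) ^ 2 ∂μ)) :
    ∀ f : X → ℝ, MemLp f 2 μ → (∫ x, f x ∂μ) = 0 →
      Real.sqrt (∫ x, (f x) ^ 2 ∂μ)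
        ≤ 4 * κ * ∑ k, Real.sqrt (∫ x, (f x - f ((θ k).symm x)) ^ 2 ∂μ) := by
  intro f hf hmean
  set S := ∑ k, √(∫ x, (f x - f ((θ k).symm x)) ^ 2 ∂μ)
  set N := √(∫ x, (f x) ^ 2 ∂μ)
  have hvariance (φ : ℝ → ℝ) (hφ : LipschitzWith 1 φ) (hφ0 : φ 0 = 0)
      (hφ_nonneg : ∀ t, 0 ≤ φ t) :
      ∫ x, (φ (f x) - ∫ y, φ (f y) ∂μ) ^ 2 ∂μ ≤ κ * (S * N) :=
    (hyp _ (hφ.comp_memLp hφ0 hf) fun _ => hφ_nonneg _).trans <|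
      mul_le_mul_of_nonneg_left (sum_sqrt_mul_sqrt_comp_le hbdd hφ hφ0 hf) hκ.le
  have hN : N ^ 2 ≤ 4 * κ * S * N := calc
    N ^ 2 = ∫ x, (f x) ^ 2 ∂μ := Real.sq_sqrt (integral_nonneg fun _ => sq_nonneg _)
    _ ≤ 2 * ∫ x, ((f x)⁺ - ∫ y, (f y)⁺ ∂μ) ^ 2 ∂μ + 2 * ∫ x, ((f x)⁻ - ∫ y, (f y)⁻ ∂μ) ^ 2 ∂μ :=
      integral_sq_le_of_integral_eq_zero hf hmean
    _ ≤ 2 * (κ * (S * N)) + 2 * (κ * (S * N)) := by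
      gcongr
      · exact hvariance _ lipschitzWith_posPart posPart_zero posPart_nonneg
      · exact hvariance _ lipschitzWith_negPart negPart_zero negPart_nonneg
    _ = 4 * κ * S * N := by ring
  have hS : 0 ≤ 4 * κ * S := by positivity
  nlinarith [Real.sqrt_nonneg (∫ x, (f x) ^ 2 ∂μ)]
end

section
/- Let Γ be a countable discrete group acting on a probability space (X,μ) by measure-preserving transformations, and suppose the action is strongly ergodic but does not have spectral gap. Then there exists a sequence (Aᵢ) of measurable subsets of X with μ(Aᵢ) > 0 for all i, μ(Aᵢ) → 0, and μ(Aᵢ △ γAᵢ)/μ(Aᵢ) → 0 for every γ ∈ Γ. -/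
/-!
Failure of spectral gap gives, for every finite family `γₖ` in `Γ` and every `κ > 0`, a function
`f ∈ L²` whose variance exceeds `κ ∑ₖ ‖f ∘ γₖ⁻¹ - f‖₂²`. Cutting `f` at a median and keeping the
larger of its two one-sided parts gives `v ≥ 0`, supported on a set of measure at most `1/2`, which
is at least as invariant as `f` and carries half of its variance. By Young's inequality `w = v²`
then moves by little in `L¹` compared with `‖w‖₁`, and the coarea formula
`∫₀^∞ μ({w > t} ∆ {w ∘ σ > t}) dt = ‖w - w ∘ σ‖₁` yields a superlevel set `A` of `w` with
`μ(A ∆ γₖA) ≤ δ μ(A)` for all `k`. Along an exhaustion of `Γ` by finite families, with `δ → 0`,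
these sets are asymptotically invariant and have measure at most `1/2`; strong ergodicity then
forces their measures to tend to `0`.
-/

open MeasureTheory Filter Set ProbabilityTheory
open scoped ENNReal symmDiff Topology

lemma setOf_lt_symmDiff_setOf_lt {X : Type*} (w w' : X → ℝ) (t : ℝ) :
    {x | t < w x} ∆ {x | t < w' x} =
      {x | t < max (w x) (w' x)} \ {x | t < min (w x) (w' x)} := by
  ext x
  simp only [mem_symmDiff, mem_ofPred_eq, Set.mem_sdiff, lt_max_iff, lt_min_iff]
  tauto

section

variable {X : Type*} [MeasurableSpace X] {μ : Measure X}

lemma measure_setOf_lt_min_add_measure_symmDiff {w w' : X → ℝ} (hw : Measurable w)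
    (hw' : Measurable w') (t : ℝ) :
    μ {x | t < min (w x) (w' x)} + μ ({x | t < w x} ∆ {x | t < w' x}) =
      μ {x | t < max (w x) (w' x)} := by
  rw [setOf_lt_symmDiff_setOf_lt, measure_add_sdiff
    (measurableSet_lt measurable_const (hw.min hw')).nullMeasurableSet, union_eq_right.2]
  exact fun x (hx : t < min (w x) (w' x)) => hx.trans_le min_le_max

lemma measurable_measure_setOf_lt (w : X → ℝ) : Measurable fun t : ℝ => μ {x | t < w x} :=
  Antitone.measurable fun _ _ hst => measure_mono fun _ hx => lt_of_le_of_lt hst hx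

lemma lintegral_measure_symmDiff_setOf_lt {w w' : X → ℝ} (hw : Measurable w)
    (hw' : Measurable w') (hw0 : 0 ≤ w) (hw'0 : 0 ≤ w') (hint : Integrable w μ) :
    ∫⁻ t in Ioi 0, μ ({x | t < w x} ∆ {x | t < w' x}) =
      ∫⁻ x, ENNReal.ofReal |w x - w' x| ∂μ := by
  have hmin0 : 0 ≤ᵐ[μ] fun x => min (w x) (w' x) := .of_forall fun x => le_min (hw0 x) (hw'0 x)
  have hmax0 : 0 ≤ᵐ[μ] fun x => max (w x) (w' x) := .of_forall fun x => le_max_of_le_left (hw0 x)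
  have hfin : ∫⁻ x, ENNReal.ofReal (min (w x) (w' x)) ∂μ ≠ ∞ :=
    (lt_of_le_of_lt (lintegral_mono fun x => ENNReal.ofReal_le_ofReal (min_le_left _ _))
      hint.lintegral_lt_top).ne
  have hlevel : ∫⁻ x, ENNReal.ofReal (min (w x) (w' x)) ∂μ +
      ∫⁻ t in Ioi 0, μ ({x | t < w x} ∆ {x | t < w' x}) =
        ∫⁻ x, ENNReal.ofReal (max (w x) (w' x)) ∂μ := by
    rw [lintegral_eq_lintegral_meas_lt μ hmin0 (hw.min hw').aemeasurable,
      lintegral_eq_lintegral_meas_lt μ hmax0 (hw.max hw').aemeasurable,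
      ← lintegral_add_left (measurable_measure_setOf_lt _)]
    exact lintegral_congr fun t => measure_setOf_lt_min_add_measure_symmDiff hw hw' t
  have hpoint : ∫⁻ x, ENNReal.ofReal (min (w x) (w' x)) ∂μ +
      ∫⁻ x, ENNReal.ofReal |w x - w' x| ∂μ = ∫⁻ x, ENNReal.ofReal (max (w x) (w' x)) ∂μ := by
    rw [← lintegral_add_left (hw.min hw').ennreal_ofReal]
    refine lintegral_congr fun x => ?_
    rw [← ENNReal.ofReal_add (le_min (hw0 x) (hw'0 x)) (abs_nonneg _), ← max_sub_min_eq_abs',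
      add_sub_cancel]
  exact (ENNReal.add_right_inj hfin).1 (hlevel.trans hpoint.symm)

lemma measurable_measure_symmDiff_setOf_lt [IsFiniteMeasure μ] {w w' : X → ℝ}
    (hw : Measurable w) (hw' : Measurable w') :
    Measurable fun t : ℝ => μ ({x | t < w x} ∆ {x | t < w' x}) := by
  have hsub : (fun t : ℝ => μ ({x | t < w x} ∆ {x | t < w' x})) =
      fun t => μ {x | t < max (w x) (w' x)} - μ {x | t < min (w x) (w' x)} :=
    funext fun t => ENNReal.eq_sub_of_add_eq (measure_ne_top _ _)
      ((add_comm _ _).trans (measure_setOf_lt_min_add_measure_symmDiff hw hw' t))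
  rw [hsub]
  exact (measurable_measure_setOf_lt _).sub (measurable_measure_setOf_lt _)

lemma exists_setOf_lt_measure_symmDiff_preimage_le [IsFiniteMeasure μ] {ι : Type*} [Fintype ι]
    {σ : ι → X → X} (hσ : ∀ k, Measurable (σ k)) {w : X → ℝ} (hw : Measurable w) (hw0 : 0 ≤ w)
    (hint : Integrable w μ) {δ : ℝ≥0∞}
    (hsmall : ∑ k, ∫⁻ x, ENNReal.ofReal |w x - w (σ k x)| ∂μ <
      δ * ∫⁻ x, ENNReal.ofReal (w x) ∂μ) :
    ∃ t > 0, 0 < μ {x | t < w x} ∧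
      ∀ k, μ ({x | t < w x} ∆ (σ k ⁻¹' {x | t < w x})) ≤ δ * μ {x | t < w x} := by
  by_contra! hbad
  have hpoint : ∀ t ∈ Ioi (0 : ℝ),
      δ * μ {x | t < w x} ≤ ∑ k, μ ({x | t < w x} ∆ {x | t < w (σ k x)}) := by
    intro t ht
    rcases eq_zero_or_pos (μ {x | t < w x}) with h0 | hpos
    · simp [h0]
    obtain ⟨k, hk⟩ := hbad t ht hpos
    exact hk.le.trans (Finset.single_le_sum
      (f := fun k => μ ({x | t < w x} ∆ {x | t < w (σ k x)})) (fun k _ => zero_le)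
      (Finset.mem_univ k))
  refine hsmall.not_ge ?_
  calc δ * ∫⁻ x, ENNReal.ofReal (w x) ∂μ = ∫⁻ t in Ioi 0, δ * μ {x | t < w x} := by
        rw [lintegral_const_mul _ (measurable_measure_setOf_lt w),
          lintegral_eq_lintegral_meas_lt μ (.of_forall hw0) hw.aemeasurable]
    _ ≤ ∫⁻ t in Ioi 0, ∑ k, μ ({x | t < w x} ∆ {x | t < w (σ k x)}) :=
        setLIntegral_mono' measurableSet_Ioi hpoint
    _ = ∑ k, ∫⁻ x, ENNReal.ofReal |w x - w (σ k x)| ∂μ := by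
        rw [lintegral_finsetSum (f := fun k t => μ ({x | t < w x} ∆ {x | t < w (σ k x)}))
          _ fun k _ => measurable_measure_symmDiff_setOf_lt hw (hw.comp (hσ k))]
        exact Finset.sum_congr rfl fun k _ => lintegral_measure_symmDiff_setOf_lt hw
          (hw.comp (hσ k)) hw0 (fun x => hw0 (σ k x)) hint

lemma abs_sq_sub_sq_le {a b ε : ℝ} (hε : 0 < ε) :
    |a ^ 2 - b ^ 2| ≤ ε / 2 * (a - b) ^ 2 + (a ^ 2 + b ^ 2) / ε := by
  have hminus : (ε * (a - b) - (a + b)) ^ 2 / (2 * ε) =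
      ε / 2 * (a - b) ^ 2 - (a ^ 2 - b ^ 2) + (a + b) ^ 2 / (2 * ε) := by
    field_simp; ring
  have hplus : (ε * (a - b) + (a + b)) ^ 2 / (2 * ε) =
      ε / 2 * (a - b) ^ 2 + (a ^ 2 - b ^ 2) + (a + b) ^ 2 / (2 * ε) := by
    field_simp; ring
  have hsum : (a ^ 2 + b ^ 2) / ε = (a + b) ^ 2 / (2 * ε) + (a - b) ^ 2 / (2 * ε) := by
    field_simp; ring
  have : 0 ≤ (ε * (a - b) - (a + b)) ^ 2 / (2 * ε) := by positivity
  have : 0 ≤ (ε * (a - b) + (a + b)) ^ 2 / (2 * ε) := by positivity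
  have : 0 ≤ (a - b) ^ 2 / (2 * ε) := by positivity
  rw [abs_le]
  constructor <;> linarith

lemma integral_abs_sq_sub_sq_comp_le {σ : X ≃ᵐ X}
    (hσ : MeasurePreserving σ μ μ) {v : X → ℝ} (hv : MemLp v 2 μ) {ε : ℝ} (hε : 0 < ε) :
    ∫ x, |v x ^ 2 - v (σ x) ^ 2| ∂μ ≤
      ε / 2 * ∫ x, (v (σ x) - v x) ^ 2 ∂μ + 2 / ε * ∫ x, v x ^ 2 ∂μ := by
  have hvσ : MemLp (fun x => v (σ x)) 2 μ := hv.comp_measurePreserving hσ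
  have hdiff : Integrable (fun x => (v (σ x) - v x) ^ 2) μ := (hvσ.sub hv).integrable_sq
  have hsq : Integrable (fun x => v x ^ 2 + v (σ x) ^ 2) μ :=
    hv.integrable_sq.add hvσ.integrable_sq
  calc ∫ x, |v x ^ 2 - v (σ x) ^ 2| ∂μ
      ≤ ∫ x, (ε / 2 * (v (σ x) - v x) ^ 2 + (v x ^ 2 + v (σ x) ^ 2) / ε) ∂μ := by
        refine integral_mono (hv.integrable_sq.sub hvσ.integrable_sq).abs
          ((hdiff.const_mul _).add (hsq.div_const _)) fun x => ?_
        simpa only [sub_sq_comm (v x)] using abs_sq_sub_sq_le (a := v x) (b := v (σ x)) hε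
    _ = ε / 2 * ∫ x, (v (σ x) - v x) ^ 2 ∂μ + 2 / ε * ∫ x, v x ^ 2 ∂μ := by
        rw [integral_add (hdiff.const_mul _) (hsq.div_const _), integral_const_mul,
          integral_div, integral_add hv.integrable_sq hvσ.integrable_sq,
          hσ.integral_comp' fun x => v x ^ 2]
        ring

lemma exists_setOf_lt_measureReal_symmDiff_preimage_le [IsFiniteMeasure μ] {ι : Type*}
    [Fintype ι] {σ : ι → X → X} (hσ : ∀ k, Measurable (σ k)) {w : X → ℝ} (hw : Measurable w)
    (hw0 : 0 ≤ w) (hint : Integrable w μ) (hintσ : ∀ k, Integrable (fun x => w (σ k x)) μ)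
    {δ : ℝ} (hδ : 0 ≤ δ) (hsmall : ∑ k, ∫ x, |w x - w (σ k x)| ∂μ < δ * ∫ x, w x ∂μ) :
    ∃ t > 0, 0 < μ.real {x | t < w x} ∧
      ∀ k, μ.real ({x | t < w x} ∆ (σ k ⁻¹' {x | t < w x})) ≤ δ * μ.real {x | t < w x} := by
  have hsmall' : ∑ k, ∫⁻ x, ENNReal.ofReal |w x - w (σ k x)| ∂μ <
      ENNReal.ofReal δ * ∫⁻ x, ENNReal.ofReal (w x) ∂μ := by
    have hsum0 : 0 ≤ ∑ k, ∫ x, |w x - w (σ k x)| ∂μ :=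
      Finset.sum_nonneg fun k _ => integral_nonneg fun _ => abs_nonneg _
    calc ∑ k, ∫⁻ x, ENNReal.ofReal |w x - w (σ k x)| ∂μ
        = ∑ k, ENNReal.ofReal (∫ x, |w x - w (σ k x)| ∂μ) :=
          Finset.sum_congr rfl fun k _ => (ofReal_integral_eq_lintegral_ofReal
            (hint.sub (hintσ k)).abs (.of_forall fun _ => abs_nonneg _)).symm
      _ = ENNReal.ofReal (∑ k, ∫ x, |w x - w (σ k x)| ∂μ) :=
          (ENNReal.ofReal_sum_of_nonneg fun k _ => integral_nonneg fun _ => abs_nonneg _).symm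
      _ < ENNReal.ofReal (δ * ∫ x, w x ∂μ) :=
          (ENNReal.ofReal_lt_ofReal_iff (hsum0.trans_lt hsmall)).2 hsmall
      _ = ENNReal.ofReal δ * ∫⁻ x, ENNReal.ofReal (w x) ∂μ := by
          rw [ENNReal.ofReal_mul hδ, ofReal_integral_eq_lintegral_ofReal hint (.of_forall hw0)]
  obtain ⟨t, ht, hpos, hA⟩ := exists_setOf_lt_measure_symmDiff_preimage_le hσ hw hw0 hint hsmall'
  refine ⟨t, ht, ENNReal.toReal_pos hpos.ne' (measure_ne_top _ _), fun k => ?_⟩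
  have := ENNReal.toReal_mono (by finiteness) (hA k)
  rwa [ENNReal.toReal_mul, ENNReal.toReal_ofReal hδ] at this

lemma sum_integral_abs_sq_sub_sq_comp_lt {ι : Type*} [Fintype ι] {σ : ι → X ≃ᵐ X}
    (hσ : ∀ k, MeasurePreserving (σ k) μ μ) {v : X → ℝ} (hv : MemLp v 2 μ) {δ : ℝ} (hδ : 0 < δ)
    (hsmall : 4 * (Fintype.card ι + 1) * ∑ k, ∫ x, (v (σ k x) - v x) ^ 2 ∂μ <
      δ ^ 2 * ∫ x, v x ^ 2 ∂μ) :
    ∑ k, ∫ x, |v x ^ 2 - v (σ k x) ^ 2| ∂μ < δ * ∫ x, v x ^ 2 ∂μ := by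
  set N : ℝ := ∫ x, v x ^ 2 ∂μ
  set D : ℝ := ∑ k, ∫ x, (v (σ k x) - v x) ^ 2 ∂μ
  have hN : 0 ≤ N := integral_nonneg fun x => sq_nonneg _
  -- the weight in Young's inequality, chosen so that both error terms are below `δ * N / 2`
  set ε : ℝ := 4 * (Fintype.card ι + 1) / δ
  have hfirst : ε / 2 * D < δ * N / 2 := by
    rw [show ε / 2 * D = 2 * (Fintype.card ι + 1) * D / δ by ring, div_lt_iff₀ hδ]
    nlinarith
  have hsecond : Fintype.card ι * (2 / ε * N) ≤ δ * N / 2 := by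
    rw [show Fintype.card ι * (2 / ε * N) =
      Fintype.card ι / (Fintype.card ι + 1) * (δ * N / 2) by simp only [ε]; field_simp; ring]
    exact mul_le_of_le_one_left (by positivity) (div_le_one_of_le₀ (by linarith) (by positivity))
  calc ∑ k, ∫ x, |v x ^ 2 - v (σ k x) ^ 2| ∂μ
      ≤ ∑ k, (ε / 2 * ∫ x, (v (σ k x) - v x) ^ 2 ∂μ + 2 / ε * N) :=
        Finset.sum_le_sum fun k _ => integral_abs_sq_sub_sq_comp_le (hσ k) hv (by positivity)
    _ = ε / 2 * D + Fintype.card ι * (2 / ε * N) := by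
        rw [Finset.sum_add_distrib, ← Finset.mul_sum, Finset.sum_const, Finset.card_univ,
          nsmul_eq_mul]
    _ < δ * N := by linarith

lemma exists_measureReal_symmDiff_preimage_le_of_posPart [IsFiniteMeasure μ] {ι : Type*}
    [Fintype ι] {σ : ι → X ≃ᵐ X} (hσ : ∀ k, MeasurePreserving (σ k) μ μ) {g : X → ℝ}
    (hg : Measurable g) (hg2 : MemLp g 2 μ) (hhalf : μ.real {x | 0 < g x} ≤ 1 / 2) {δ : ℝ}
    (hδ : 0 < δ)
    (hsmall : 4 * (Fintype.card ι + 1) * ∑ k, ∫ x, (g (σ k x) - g x) ^ 2 ∂μ <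
      δ ^ 2 * ∫ x, max (g x) 0 ^ 2 ∂μ) :
    ∃ A, MeasurableSet A ∧ 0 < μ.real A ∧ μ.real A ≤ 1 / 2 ∧
      ∀ k, μ.real (A ∆ (σ k ⁻¹' A)) ≤ δ * μ.real A := by
  set v : X → ℝ := fun x => max (g x) 0
  have hv : Measurable (fun x => v x ^ 2) := (hg.max measurable_const).pow_const 2
  have hv2 : MemLp v 2 μ := hg2.pos_part
  have hvσ (k : ι) : MemLp (fun x => v (σ k x)) 2 μ := hv2.comp_measurePreserving (hσ k)
  have hcontract : 4 * (Fintype.card ι + 1) * ∑ k, ∫ x, (v (σ k x) - v x) ^ 2 ∂μ <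
      δ ^ 2 * ∫ x, v x ^ 2 ∂μ := by
    refine lt_of_le_of_lt (mul_le_mul_of_nonneg_left ?_ (by positivity)) hsmall
    exact Finset.sum_le_sum fun k _ => integral_mono ((hvσ k).sub hv2).integrable_sq
      (((hg2.comp_measurePreserving (hσ k)).sub hg2).integrable_sq) fun x =>
        sq_le_sq.2 (abs_max_sub_max_le_abs _ _ _)
  obtain ⟨t, ht, hpos, hA⟩ := exists_setOf_lt_measureReal_symmDiff_preimage_le
    (fun k => (σ k).measurable) hv (fun x => sq_nonneg _) hv2.integrable_sq
    (fun k => (hvσ k).integrable_sq) hδ.le (sum_integral_abs_sq_sub_sq_comp_lt hσ hv2 hδ hcontract)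
  refine ⟨{x | t < v x ^ 2}, measurableSet_lt measurable_const hv, hpos,
    (measureReal_mono fun x (hx : t < max (g x) 0 ^ 2) => ?_).trans hhalf, hA⟩
  show 0 < g x
  by_contra! hgx
  rw [max_eq_right hgx] at hx
  linarith

lemma measureReal_setOf_lt_le_of_forall_lt [IsFiniteMeasure μ] {f : X → ℝ} {c a : ℝ}
    (h : ∀ t, c < t → μ.real {x | t < f x} ≤ a) : μ.real {x | c < f x} ≤ a := by
  obtain ⟨u, hu, hcu, hlim⟩ := exists_seq_strictAnti_tendsto c
  have hunion : ⋃ n, {x | u n < f x} = {x | c < f x} := by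
    ext x
    simp only [mem_iUnion, mem_ofPred_eq]
    exact ⟨fun ⟨n, hn⟩ => (hcu n).trans hn, fun hx => (hlim.eventually (gt_mem_nhds hx)).exists⟩
  have hmono : Monotone fun n => {x | u n < f x} :=
    fun m n hmn x (hx : u m < f x) => (hu.antitone hmn).trans_lt hx
  have hconv := tendsto_measure_iUnion_atTop (μ := μ) hmono
  rw [hunion] at hconv
  exact le_of_tendsto' ((ENNReal.tendsto_toReal (measure_ne_top _ _)).comp hconv)
    fun n => h _ (hcu n)

lemma exists_measureReal_setOf_lt_lt [IsFiniteMeasure μ] {f : X → ℝ} (hf : Measurable f)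
    {a : ℝ} (ha : 0 < a) : ∃ t, μ.real {x | t < f x} < a := by
  have hinter : ⋂ n : ℕ, {x | (n : ℝ) < f x} = ∅ := by
    ext x
    simpa using exists_nat_ge (f x)
  have hconv := tendsto_measure_iInter_atTop (μ := μ)
    (fun n => (measurableSet_lt measurable_const hf).nullMeasurableSet)
    (fun (m n : ℕ) hmn x (hx : (n : ℝ) < f x) => show (m : ℝ) < f x from
      lt_of_le_of_lt (Nat.cast_le.2 hmn) hx)
    ⟨0, measure_ne_top _ _⟩
  rw [hinter, measure_empty] at hconv
  obtain ⟨n, hn⟩ := (((ENNReal.tendsto_toReal ENNReal.zero_ne_top).comp hconv).eventually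
    (gt_mem_nhds ha)).exists
  exact ⟨n, hn⟩

lemma exists_median [IsProbabilityMeasure μ] {f : X → ℝ} (hf : Measurable f) :
    ∃ c, μ.real {x | c < f x} ≤ 1 / 2 ∧ μ.real {x | f x < c} ≤ 1 / 2 := by
  set S := {t : ℝ | μ.real {x | t < f x} ≤ 1 / 2}
  have hle_lt (t : ℝ) : μ.real {x | f x ≤ t} = 1 - μ.real {x | t < f x} := by
    rw [← probReal_compl_eq_one_sub (measurableSet_lt measurable_const hf)]
    congr 1
    ext x
    simp [not_lt]
  have hlt_of_notMem {t : ℝ} (ht : t ∉ S) : μ.real {x | f x ≤ t} < 1 / 2 := by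
    simp only [S, mem_ofPred_eq, not_le] at ht
    linarith [hle_lt t]
  obtain ⟨t₀, ht₀⟩ := exists_measureReal_setOf_lt_lt hf (μ := μ) (a := 1 / 2) (by norm_num)
  obtain ⟨s₀, hs₀⟩ :=
    exists_measureReal_setOf_lt_lt (f := fun x => -f x) hf.neg (μ := μ) (a := 1 / 2) (by norm_num)
  have hbdd : BddBelow S := by
    refine ⟨-s₀, fun t (ht : μ.real {x | t < f x} ≤ 1 / 2) => ?_⟩
    by_contra! hts
    have : μ.real {x | f x ≤ t} ≤ μ.real {x | s₀ < -f x} :=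
      measureReal_mono fun x (hx : f x ≤ t) => show s₀ < -f x by linarith
    linarith [hle_lt t]
  refine ⟨sInf S, measureReal_setOf_lt_le_of_forall_lt fun t ht => ?_, ?_⟩
  · obtain ⟨s, hs, hst⟩ := exists_lt_of_csInf_lt ⟨t₀, ht₀.le⟩ ht
    exact (measureReal_mono fun x (hx : t < f x) => show s < f x from hst.trans hx).trans hs
  · have := measureReal_setOf_lt_le_of_forall_lt (μ := μ) (f := fun x => -f x) (c := -sInf S)
      (a := 1 / 2) fun t ht => ?_
    · simpa using this
    refine (measureReal_mono fun x (hx : t < -f x) => show f x ≤ -t by linarith).trans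
      (hlt_of_notMem (notMem_of_lt_csInf (by linarith) hbdd)).le

lemma exists_measureReal_symmDiff_preimage_le_of_variance [IsProbabilityMeasure μ] {ι : Type*}
    [Fintype ι] {σ : ι → X ≃ᵐ X} (hσ : ∀ k, MeasurePreserving (σ k) μ μ) {f : X → ℝ}
    (hf : Measurable f) (hf2 : MemLp f 2 μ) {δ : ℝ} (hδ : 0 < δ)
    (hsmall : 8 * (Fintype.card ι + 1) * ∑ k, ∫ x, (f (σ k x) - f x) ^ 2 ∂μ <
      δ ^ 2 * Var[f; μ]) :
    ∃ A, MeasurableSet A ∧ 0 < μ.real A ∧ μ.real A ≤ 1 / 2 ∧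
      ∀ k, μ.real (A ∆ (σ k ⁻¹' A)) ≤ δ * μ.real A := by
  obtain ⟨c, hup, hlow⟩ := exists_median hf (μ := μ)
  have hup2 : MemLp (fun x => f x - c) 2 μ := hf2.sub (memLp_const c)
  have hlow2 : MemLp (fun x => c - f x) 2 μ := (memLp_const c).sub hf2
  have hsplit : ∫ x, max (f x - c) 0 ^ 2 ∂μ + ∫ x, max (c - f x) 0 ^ 2 ∂μ =
      ∫ x, (f x - c) ^ 2 ∂μ := by
    rw [← integral_add hup2.pos_part.integrable_sq hlow2.pos_part.integrable_sq]
    refine integral_congr_ae (.of_forall fun x => ?_)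
    dsimp only
    rcases le_total (f x) c with h | h
    · rw [max_eq_right (sub_nonpos.2 h), max_eq_left (sub_nonneg.2 h)]
      ring
    · rw [max_eq_left (sub_nonneg.2 h), max_eq_right (sub_nonpos.2 h)]
      ring
  have hvar : δ ^ 2 * Var[f; μ] ≤ δ ^ 2 * ∫ x, (f x - c) ^ 2 ∂μ := by
    rw [← variance_sub_const hf.aestronglyMeasurable c]
    exact mul_le_mul_of_nonneg_left (variance_le_expectation_sq (by fun_prop)) (sq_nonneg δ)
  rcases le_total (∫ x, max (c - f x) 0 ^ 2 ∂μ) (∫ x, max (f x - c) 0 ^ 2 ∂μ) with h | h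
  · refine exists_measureReal_symmDiff_preimage_le_of_posPart hσ (hf.sub_const c) hup2
      (by simpa only [sub_pos] using hup) hδ ?_
    simp only [sub_sub_sub_cancel_right]
    nlinarith [mul_le_mul_of_nonneg_left h (sq_nonneg δ)]
  · refine exists_measureReal_symmDiff_preimage_le_of_posPart hσ (g := fun x => c - f x)
      (measurable_const.sub hf) hlow2
      (by simpa only [sub_pos] using hlow) hδ ?_
    have hdiff (k : ι) (x : X) : (c - f (σ k x) - (c - f x)) ^ 2 = (f (σ k x) - f x) ^ 2 := by
      ring
    simp only [hdiff]
    nlinarith [mul_le_mul_of_nonneg_left h (sq_nonneg δ)]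

lemma exists_measureReal_symmDiff_preimage_le_of_no_gap [IsProbabilityMeasure μ] {ι : Type*}
    [Fintype ι] {σ : ι → X ≃ᵐ X} (hσ : ∀ k, MeasurePreserving (σ k) μ μ)
    (hnogap : ∀ κ : ℝ, 0 < κ → ∃ f : X → ℝ, MemLp f 2 μ ∧
      κ * ∑ k, ∫ x, (f (σ k x) - f x) ^ 2 ∂μ < ∫ x, (f x - ∫ y, f y ∂μ) ^ 2 ∂μ)
    {δ : ℝ} (hδ : 0 < δ) :
    ∃ A, MeasurableSet A ∧ 0 < μ.real A ∧ μ.real A ≤ 1 / 2 ∧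
      ∀ k, μ.real (A ∆ (σ k ⁻¹' A)) ≤ δ * μ.real A := by
  obtain ⟨f, hf2, hlt⟩ := hnogap (8 * (Fintype.card ι + 1) / δ ^ 2) (by positivity)
  have hff' : f =ᵐ[μ] hf2.1.mk f := hf2.1.ae_eq_mk
  refine exists_measureReal_symmDiff_preimage_le_of_variance hσ
    hf2.1.stronglyMeasurable_mk.measurable (hf2.ae_eq hff') hδ ?_
  have hdiff : ∑ k, ∫ x, (hf2.1.mk f (σ k x) - hf2.1.mk f x) ^ 2 ∂μ =
      ∑ k, ∫ x, (f (σ k x) - f x) ^ 2 ∂μ :=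
    Finset.sum_congr rfl fun k _ => integral_congr_ae <| by
      filter_upwards [(hσ k).quasiMeasurePreserving.ae_eq_comp hff', hff'] with x hσx hx
      simp only [Function.comp_apply] at hσx
      rw [hσx, hx]
  have hvar : Var[hf2.1.mk f; μ] = ∫ x, (f x - ∫ y, f y ∂μ) ^ 2 ∂μ := by
    rw [← variance_congr hff', variance_eq_integral hf2.1.aemeasurable]
  rw [hdiff, hvar]
  calc 8 * (Fintype.card ι + 1) * ∑ k, ∫ x, (f (σ k x) - f x) ^ 2 ∂μ
      = δ ^ 2 * (8 * (Fintype.card ι + 1) / δ ^ 2 * ∑ k, ∫ x, (f (σ k x) - f x) ^ 2 ∂μ) := by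
        field_simp
    _ < δ ^ 2 * ∫ x, (f x - ∫ y, f y ∂μ) ^ 2 ∂μ := by gcongr

end

lemma exists_seq_fin_forall_eventually_exists_eq (α : Type*) [Countable α] :
    ∃ (n : ℕ → ℕ) (γ : ∀ m, Fin (n m) → α), ∀ a, ∀ᶠ m in atTop, ∃ k, γ m k = a := by
  rcases isEmpty_or_nonempty α with hα | hα
  · exact ⟨fun _ => 0, fun _ => finZeroElim, fun a => isEmptyElim a⟩
  obtain ⟨e, he⟩ := exists_surjective_nat α
  refine ⟨id, fun m k => e k, fun a => ?_⟩
  obtain ⟨j, rfl⟩ := he a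
  filter_upwards [eventually_gt_atTop j] with m hm using ⟨⟨j, hm⟩, rfl⟩

lemma tendsto_zero_of_tendsto_mul_one_sub {α : Type*} {l : Filter α} {u : α → ℝ}
    (h0 : ∀ a, 0 ≤ u a) (hhalf : ∀ a, u a ≤ 1 / 2)
    (h : Tendsto (fun a => u a * (1 - u a)) l (𝓝 0)) : Tendsto u l (𝓝 0) :=
  squeeze_zero (g := fun a => 2 * (u a * (1 - u a))) h0 (fun a => by nlinarith [h0 a, hhalf a])
    (by simpa using h.const_mul 2)

theorem stmt7_general {Γ : Type*} [Countable Γ]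
    {X : Type*} [MeasurableSpace X] (μ : Measure X) [IsProbabilityMeasure μ]
    (α : Γ → X ≃ᵐ X)
    (hpmp : ∀ g : Γ, MeasurePreserving (α g) μ μ)
    (hse : ∀ A : ℕ → Set X, (∀ n, MeasurableSet (A n)) →
      (∀ g : Γ, Tendsto (fun n => (μ (symmDiff (A n) (α g '' A n))).toReal) atTop (nhds 0)) →
      Tendsto (fun n => (μ (A n)).toReal * (1 - (μ (A n)).toReal)) atTop (nhds 0))
    (hnogap : ¬ ∃ (n : ℕ) (γ : Fin n → Γ) (κ : ℝ), 0 < κ ∧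
      ∀ f : X → ℝ, MemLp f 2 μ →
        ∫ x, (f x - ∫ y, f y ∂μ) ^ 2 ∂μ
          ≤ κ * ∑ k, ∫ x, (f ((α (γ k)).symm x) - f x) ^ 2 ∂μ) :
    ∃ A : ℕ → Set X, (∀ i, MeasurableSet (A i)) ∧ (∀ i, 0 < μ (A i)) ∧
      Tendsto (fun i => (μ (A i)).toReal) atTop (nhds 0) ∧
      ∀ g : Γ, Tendsto
        (fun i => (μ (symmDiff (A i) (α g '' A i))).toReal / (μ (A i)).toReal)
        atTop (nhds 0) := by
  obtain ⟨n, γ, hγ⟩ := exists_seq_fin_forall_eventually_exists_eq Γ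
  push Not at hnogap
  have hfolner (m : ℕ) : ∃ A, MeasurableSet A ∧ 0 < μ.real A ∧ μ.real A ≤ 1 / 2 ∧
      ∀ k, μ.real (A ∆ (α (γ m k) '' A)) ≤ 1 / (m + 1) * μ.real A := by
    obtain ⟨A, hA, hpos, hhalf, hsmall⟩ := exists_measureReal_symmDiff_preimage_le_of_no_gap
      (σ := fun k => (α (γ m k)).symm) (fun k => (hpmp _).symm _) (hnogap (n m) (γ m))
      (δ := 1 / (m + 1)) (by positivity)
    exact ⟨A, hA, hpos, hhalf, fun k => by
      rw [MeasurableEquiv.image_eq_preimage_symm]; exact hsmall k⟩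
  choose A hA hpos hhalf hsmall using hfolner
  have hδ : Tendsto (fun m : ℕ => 1 / ((m : ℝ) + 1)) atTop (𝓝 0) :=
    tendsto_one_div_add_atTop_nhds_zero_nat
  have hsym (g : Γ) :
      ∀ᶠ m in atTop, μ.real (A m ∆ (α g '' A m)) ≤ 1 / (m + 1) * μ.real (A m) := by
    filter_upwards [hγ g] with m ⟨k, hk⟩
    exact hk ▸ hsmall m k
  have hsym0 (g : Γ) : Tendsto (fun m => μ.real (A m ∆ (α g '' A m))) atTop (𝓝 0) :=
    squeeze_zero' (.of_forall fun m => measureReal_nonneg) ((hsym g).mono fun m hm =>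
      hm.trans (mul_le_of_le_one_right (by positivity) ((hhalf m).trans (by norm_num)))) hδ
  refine ⟨A, hA, fun m => (ENNReal.toReal_pos_iff.1 (hpos m)).1,
    tendsto_zero_of_tendsto_mul_one_sub (fun m => measureReal_nonneg) hhalf (hse A hA hsym0),
    fun g => ?_⟩
  refine squeeze_zero' (.of_forall fun m => div_nonneg measureReal_nonneg measureReal_nonneg)
    ((hsym g).mono fun m hm => (div_le_iff₀ (hpos m)).2 hm) hδ

/-- A pmp action of a countable discrete group `Γ` on `(X, μ)` which is strongly ergodic
but has no spectral gap admits an I-sequence: a sequence `(Aᵢ)` of measurable sets of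
positive measure with `μ(Aᵢ) → 0` and `μ(Aᵢ △ γAᵢ)/μ(Aᵢ) → 0` for every `γ ∈ Γ`. -/
theorem stmt7 {Γ : Type*} [Group Γ] [Countable Γ]
    {X : Type*} [MeasurableSpace X] (μ : Measure X) [IsProbabilityMeasure μ]
    (α : Γ → X ≃ᵐ X)
    (haction : ∀ g h : Γ, ∀ x : X, α (g * h) x = α g (α h x))
    (hpmp : ∀ g : Γ, MeasurePreserving (α g) μ μ)
    (hse : ∀ A : ℕ → Set X, (∀ n, MeasurableSet (A n)) →
      (∀ g : Γ, Tendsto (fun n => (μ (symmDiff (A n) (α g '' A n))).toReal) atTop (nhds 0)) →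
      Tendsto (fun n => (μ (A n)).toReal * (1 - (μ (A n)).toReal)) atTop (nhds 0))
    (hnogap : ¬ ∃ (n : ℕ) (γ : Fin n → Γ) (κ : ℝ), 0 < κ ∧
      ∀ f : X → ℝ, MemLp f 2 μ →
        ∫ x, (f x - ∫ y, f y ∂μ) ^ 2 ∂μ
          ≤ κ * ∑ k, ∫ x, (f ((α (γ k)).symm x) - f x) ^ 2 ∂μ) :
    ∃ A : ℕ → Set X, (∀ i, MeasurableSet (A i)) ∧ (∀ i, 0 < μ (A i)) ∧
      Tendsto (fun i => (μ (A i)).toReal) atTop (nhds 0) ∧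
      ∀ g : Γ, Tendsto
        (fun i => (μ (symmDiff (A i) (α g '' A i))).toReal / (μ (A i)).toReal)
        atTop (nhds 0) :=
  stmt7_general μ α hpmp hse hnogap
end
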